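/- Let a < b < n be coprime positive integers (gcd(a,b)=1). For all real t1, t2, t3, μ_{a,b,n}(t1,t2,t3) ≤ max( (n(a+b)·μ_{a,b}(t1,t2) + ab)/(2ab + an + bn), (3b−a)/(2n) ). -/

import Mathlib

/-- Distance from a real number to the nearest integer. -/
noncomputable def dni (u : ℝ) : ℝ := |u - round u|

/-- Approximation cost of `(t1, t2)` relative to the two-element set `{a, b}`. -/
noncomputable def mu2 (a b : ℕ) (t1 t2 : ℝ) : ℝ :=
  ⨅ x : ℝ, max (dni (t1 - x * a)) (dni (t2 - x * b))

/-- Approximation cost of `(t1, t2, t3)` relative to the set `{a, b, n}`. -/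
noncomputable def mu3 (a b n : ℕ) (t1 t2 t3 : ℝ) : ℝ :=
  ⨅ x : ℝ, max (dni (t1 - x * a)) (max (dni (t2 - x * b)) (dni (t3 - x * n)))

/-- Angular Kronecker constant of `{a, b, n}`. -/
noncomputable def alpha3 (a b n : ℕ) : ℝ :=
  sSup {v : ℝ | ∃ t1 t2 t3 : ℝ, v = mu3 a b n t1 t2 t3}

/-- Binary Kronecker constant of `{a, b, n}`. -/
noncomputable def beta3 (a b n : ℕ) : ℝ :=
  sSup {v : ℝ | ∃ t1 t2 t3 : ℝ, t1 ∈ ({0, 1/2} : Set ℝ) ∧ t2 ∈ ({0, 1/2} : Set ℝ) ∧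
    t3 ∈ ({0, 1/2} : Set ℝ) ∧ v = mu3 a b n t1 t2 t3}

/-!
If `t₁ - z a ∈ ℤ`, then `⟨t₁ - x a⟩ ≤ c` on the whole interval `|x - z| ≤ c / a`.
Starting from a point `y` with `⟨t₁ - y a⟩, ⟨t₂ - y b⟩ ≤ m`, such exact points `z`, `w` lie
within `m / a`, `m / b` of `y`, so the two intervals for `a` and `b` overlap in an interval of
length at least `min (2c/a) (2c/b) ((c - m)(1/a + 1/b))`. For `c` the right-hand side with `m`
in place of `μ_{a,b}`, this length is at least `(1 - 2c)/n`, so `t₃ - x n` sweeps an interval of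
length `1 - 2c` and comes within `c` of an integer. The bound is continuous and monotone in `m`,
so it passes to the infimum `m → μ_{a,b}`.
-/

open Set

lemma dni_nonneg (u : ℝ) : 0 ≤ dni u := abs_nonneg _

lemma dni_le_half (u : ℝ) : dni u ≤ 1 / 2 := abs_sub_round u

lemma dni_le_abs_sub_intCast (u : ℝ) (k : ℤ) : dni u ≤ |u - k| := round_le u k

lemma exists_mem_Icc_dni_le {α β c : ℝ} (hc0 : 0 ≤ c) (hc : c ≤ 1 / 2)
    (h : 1 - 2 * c ≤ β - α) : ∃ u ∈ Icc α β, dni u ≤ c := by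
  -- the witness is `α` itself if it lies within `c` of `k`, and `k - c` otherwise
  set k : ℤ := ⌈α - c⌉
  have hk : α - c ≤ k := Int.le_ceil _
  have hk' : (k : ℝ) < α - c + 1 := Int.ceil_lt_add_one _
  refine ⟨max α (k - c), ⟨le_max_left _ _, max_le (by linarith) (by linarith)⟩,
    (dni_le_abs_sub_intCast _ k).trans ?_⟩
  rcases max_cases α (k - c) with ⟨h₁, h₂⟩ | ⟨h₁, _⟩
  · rw [h₁, abs_le]; constructor <;> linarith
  · rw [h₁, sub_sub_cancel_left, abs_neg, abs_of_nonneg hc0]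

lemma exists_mem_Icc_dni_sub_mul_le (t : ℝ) {n c p q : ℝ} (hn : 0 < n) (hc0 : 0 ≤ c)
    (hc : c ≤ 1 / 2) (h : (1 - 2 * c) / n ≤ q - p) :
    ∃ x ∈ Icc p q, dni (t - x * n) ≤ c := by
  rw [div_le_iff₀ hn] at h
  obtain ⟨u, ⟨hu₁, hu₂⟩, hu⟩ :=
    exists_mem_Icc_dni_le (α := t - q * n) (β := t - p * n) hc0 hc (by linarith)
  refine ⟨(t - u) / n, ⟨?_, ?_⟩, ?_⟩
  · rw [le_div_iff₀ hn]; linarith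
  · rw [div_le_iff₀ hn]; linarith
  · rwa [div_mul_cancel₀ _ hn.ne', sub_sub_cancel]

/-- `z` is the point near `y` at which `t - z * a` is exactly an integer. -/
lemma exists_dni_sub_mul_le_abs_sub_mul (t y : ℝ) {a : ℝ} (ha : 0 < a) :
    ∃ z, |z - y| * a = dni (t - y * a) ∧ ∀ x, dni (t - x * a) ≤ |x - z| * a := by
  set k := round (t - y * a)
  have key : ∀ x, |x - (t - k) / a| * a = |t - x * a - k| := fun x => by
    rw [← abs_of_pos ha, ← abs_mul, abs_of_pos ha, ← abs_neg]
    congr 1; field_simp; ring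
  exact ⟨(t - k) / a, by rw [abs_sub_comm, key]; rfl,
    fun x => (dni_le_abs_sub_intCast _ k).trans_eq (key x).symm⟩

theorem exists_triple_dni_le_of_pair_dni_le {a b n c m t₁ t₂ t₃ y : ℝ} (ha : 0 < a) (hb : 0 < b)
    (hn : 0 < n) (hc0 : 0 ≤ c) (hc : c ≤ 1 / 2)
    (hy₁ : dni (t₁ - y * a) ≤ m) (hy₂ : dni (t₂ - y * b) ≤ m)
    (hca : a * (1 - 2 * c) ≤ 2 * c * n) (hcb : b * (1 - 2 * c) ≤ 2 * c * n)
    (hcm : a * b * (1 - 2 * c) ≤ n * (a + b) * (c - m)) :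
    ∃ x, dni (t₁ - x * a) ≤ c ∧ dni (t₂ - x * b) ≤ c ∧ dni (t₃ - x * n) ≤ c := by
  obtain ⟨z, hzy, hz⟩ := exists_dni_sub_mul_le_abs_sub_mul t₁ y ha
  obtain ⟨w, hwy, hw⟩ := exists_dni_sub_mul_le_abs_sub_mul t₂ y hb
  have hzy' : |z - y| ≤ m / a := by rw [le_div_iff₀ ha]; linarith
  have hwy' : |w - y| ≤ m / b := by rw [le_div_iff₀ hb]; linarith
  rw [abs_le] at hzy' hwy'
  have hLa : (1 - 2 * c) / n ≤ 2 * c / a := by rw [div_le_div_iff₀ hn ha]; linarith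
  have hLb : (1 - 2 * c) / n ≤ 2 * c / b := by rw [div_le_div_iff₀ hn hb]; linarith
  have hLab : (1 - 2 * c) / n ≤ (c - m) / a + (c - m) / b := by
    rw [div_add_div _ _ ha.ne' hb.ne', div_le_div_iff₀ hn (mul_pos ha hb)]; linarith
  -- `[p, q]` is where both `|x - z| * a ≤ c` and `|x - w| * b ≤ c`
  obtain ⟨x, ⟨hpx, hxq⟩, hx⟩ := exists_mem_Icc_dni_sub_mul_le t₃ hn hc0 hc
    (p := max (z - c / a) (w - c / b)) (q := min (z + c / a) (w + c / b)) <| by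
      rw [le_sub_iff_add_le, ← le_sub_iff_add_le', ← min_sub_sub_right]
      refine max_le (le_min ?_ ?_) (le_min ?_ ?_) <;>
        linarith [sub_div c m a, sub_div c m b, mul_div_assoc 2 c a, mul_div_assoc 2 c b]
  rw [max_le_iff] at hpx
  rw [le_min_iff] at hxq
  refine ⟨x, (hz x).trans ?_, (hw x).trans ?_, hx⟩
  · rw [← le_div_iff₀ ha, abs_le]; constructor <;> linarith
  · rw [← le_div_iff₀ hb, abs_le]; constructor <;> linarith

lemma mu3_le (a b n : ℕ) (t1 t2 t3 x : ℝ) :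
    mu3 a b n t1 t2 t3 ≤ max (dni (t1 - x * a)) (max (dni (t2 - x * b)) (dni (t3 - x * n))) :=
  ciInf_le ⟨0, forall_mem_range.2 fun _ => le_max_of_le_left (dni_nonneg _)⟩ x

lemma mu3_le_half (a b n : ℕ) (t1 t2 t3 : ℝ) : mu3 a b n t1 t2 t3 ≤ 1 / 2 :=
  (mu3_le a b n t1 t2 t3 0).trans <|
    max_le (dni_le_half _) (max_le (dni_le_half _) (dni_le_half _))

lemma bddBelow_range_mu2 (a b : ℕ) (t1 t2 : ℝ) :
    BddBelow (range fun x : ℝ => max (dni (t1 - x * a)) (dni (t2 - x * b))) :=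
  ⟨0, forall_mem_range.2 fun _ => le_max_of_le_left (dni_nonneg _)⟩

lemma mu3_le_of_dni_le {a b n : ℕ} (ha : 0 < a) (hab : a < b) (hbn : b < n)
    {t1 t2 t3 y m : ℝ} (hy₁ : dni (t1 - y * a) ≤ m) (hy₂ : dni (t2 - y * b) ≤ m) :
    mu3 a b n t1 t2 t3 ≤
      max ((n * (a + b) * m + a * b) / (2 * a * b + a * n + b * n))
        ((3 * (b : ℝ) - a) / (2 * n)) := by
  have ha' : (0 : ℝ) < a := by exact_mod_cast ha
  have hab' : (a : ℝ) < b := by exact_mod_cast hab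
  have hn' : (0 : ℝ) < n := by exact_mod_cast ha.trans (hab.trans hbn)
  set c := max ((n * (a + b) * m + a * b) / (2 * a * b + a * n + b * n))
    ((3 * (b : ℝ) - a) / (2 * n))
  rcases le_or_gt (1 / 2) c with hc | hc
  · exact (mu3_le_half a b n t1 t2 t3).trans hc
  have hc₁ : n * (a + b) * m + a * b ≤ c * (2 * a * b + a * n + b * n) :=
    (div_le_iff₀ (by positivity)).1 (le_max_left _ _)
  have hc₂ : 3 * (b : ℝ) - a ≤ c * (2 * n) := (div_le_iff₀ (by positivity)).1 (le_max_right _ _)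
  have hc0 : 0 ≤ c := by nlinarith
  obtain ⟨x, hx₁, hx₂, hx₃⟩ := exists_triple_dni_le_of_pair_dni_le (t₃ := t3) ha'
    (ha'.trans hab') hn' hc0 hc.le hy₁ hy₂ (by nlinarith) (by nlinarith) (by nlinarith)
  exact (mu3_le a b n t1 t2 t3 x).trans (max_le hx₁ (max_le hx₂ hx₃))

theorem stmt_7_general (a b n : ℕ) (ha : 0 < a) (hab : a < b) (hbn : b < n)
    (t1 t2 t3 : ℝ) :
    mu3 a b n t1 t2 t3 ≤
      max ((n * (a + b) * mu2 a b t1 t2 + a * b) / (2 * a * b + a * n + b * n))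
        ((3 * (b : ℝ) - a) / (2 * n)) := by
  set F : ℝ → ℝ := fun m => max ((n * (a + b) * m + a * b) / (2 * a * b + a * n + b * n))
    ((3 * (b : ℝ) - a) / (2 * n))
  have hF_mono : Monotone F := fun m₁ m₂ h => by simp only [F]; gcongr
  have hF_cont : Continuous F := by fun_prop
  calc mu3 a b n t1 t2 t3 ≤ ⨅ y : ℝ, F (max (dni (t1 - y * a)) (dni (t2 - y * b))) :=
        le_ciInf fun y => mu3_le_of_dni_le ha hab hbn (le_max_left _ _) (le_max_right _ _)
    _ = F (mu2 a b t1 t2) :=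
        (hF_mono.map_ciInf_of_continuousAt hF_cont.continuousAt
          (bddBelow_range_mu2 a b t1 t2)).symm

theorem stmt_7 (a b n : ℕ) (ha : 0 < a) (hab : a < b) (hbn : b < n)
    (hcop : Nat.Coprime a b) (t1 t2 t3 : ℝ) :
    mu3 a b n t1 t2 t3 ≤
      max ((n * (a + b) * mu2 a b t1 t2 + a * b) / (2 * a * b + a * n + b * n))
        ((3 * (b : ℝ) - a) / (2 * n)) :=
  stmt_7_general a b n ha hab hbn t1 t2 t3
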